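/- Let ϑ: (G,P) → (ℤ^N, ℤ₊^N) be a controlled map with the minimality property and let m ∈ ℤ₊^N. Then every p ∈ P with ϑ(p) ≥ m factors as p = rp' where r is the unique minimal element of ϑ⁻¹([m,∞]) ∩ P with r ≤ p. Moreover, if r is minimal in ϑ⁻¹([m,∞]) ∩ P but ϑ(r) ∉ [m, m+m'], then r ∨ q = ∞ for every q ∈ P with ϑ(q) ∈ [m, m+m']. -/

import Mathlib

/-!
Because `ϑ` is finite-to-one and order intervals of `ℤ^N` are finite, the elements `r ∈ P`
with `m ≤ ϑ(r)` and `r ≤ p` form a finite set, which has a minimal element below `p`; any two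
such minimal elements have `p` as a common upper bound, so the minimality property makes it
unique. If `r` is minimal and `r ∨ q < ∞`, the same argument identifies `r` with the minimal
element below `q`, so `ϑ(r) ≤ ϑ(q) ≤ m + m'`.
-/

/-- A quasi-lattice ordered group structure on a group `G`: a positive cone `P`
(submonoid with `P ∩ P⁻¹ = {1}`) such that any two elements of `P` with a common
upper bound (for the left-invariant order `g ≤ h ↔ g⁻¹ * h ∈ P`) have a least
common upper bound in `P`. -/
structure QuasiLattice (G : Type*) [Group G] where
  P : Set G
  one_mem : (1 : G) ∈ P
  mul_mem : ∀ {a b : G}, a ∈ P → b ∈ P → a * b ∈ P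
  antisymm' : ∀ g ∈ P, g⁻¹ ∈ P → g = 1
  lub_exists : ∀ p ∈ P, ∀ q ∈ P,
    (∃ r ∈ P, p⁻¹ * r ∈ P ∧ q⁻¹ * r ∈ P) →
    ∃ r ∈ P, p⁻¹ * r ∈ P ∧ q⁻¹ * r ∈ P ∧
      ∀ s ∈ P, p⁻¹ * s ∈ P → q⁻¹ * s ∈ P → r⁻¹ * s ∈ P

namespace QuasiLattice

variable {G G' : Type*} [Group G] [Group G']

/-- The left-invariant partial order induced by the positive cone. -/
def le (Q : QuasiLattice G) (g h : G) : Prop := g⁻¹ * h ∈ Q.P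

/-- `p` and `q` have a common upper bound in `P` (i.e. `p ∨ q < ∞`). -/
def HasCUB (Q : QuasiLattice G) (p q : G) : Prop := ∃ r ∈ Q.P, Q.le p r ∧ Q.le q r

/-- `r` is the least common upper bound of `p` and `q` in `P`. -/
def IsLub (Q : QuasiLattice G) (p q r : G) : Prop :=
  r ∈ Q.P ∧ Q.le p r ∧ Q.le q r ∧ ∀ s ∈ Q.P, Q.le p s → Q.le q s → Q.le r s

end QuasiLattice

/-- A controlled map between quasi-lattice ordered groups: an order-preserving group
homomorphism, finite-to-one on `P`, respecting least upper bounds. -/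
structure ControlledMap {G G' : Type*} [Group G] [Group G']
    (Q : QuasiLattice G) (Q' : QuasiLattice G') where
  toFun : G →* G'
  mapsP : ∀ p ∈ Q.P, toFun p ∈ Q'.P
  finite_fibers : ∀ g' : G', {p | p ∈ Q.P ∧ toFun p = g'}.Finite
  map_lub : ∀ p ∈ Q.P, ∀ q ∈ Q.P, ∀ r, Q.IsLub p q r →
    Q'.IsLub (toFun p) (toFun q) (toFun r)

namespace ControlledMap

variable {G G' : Type*} [Group G] [Group G'] {Q : QuasiLattice G} {Q' : QuasiLattice G'}

/-- `p` is a minimal element of `ϑ⁻¹([m,∞]) ∩ P`. -/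
def Minimal (θ : ControlledMap Q Q') (m : G') (p : G) : Prop :=
  p ∈ Q.P ∧ Q'.le m (θ.toFun p) ∧
    ∀ r ∈ Q.P, Q'.le m (θ.toFun r) → Q.le r p → r = p

/-- The minimality property of a controlled map: distinct minimal elements of
`ϑ⁻¹([m,∞]) ∩ P` have no common upper bound in `P`. -/
def MinimalityProperty (θ : ControlledMap Q Q') : Prop :=
  ∀ m ∈ Q'.P, ∀ p q : G, θ.Minimal m p → θ.Minimal m q → p ≠ q → ¬ Q.HasCUB p q

end ControlledMap

/-- The quasi-lattice ordered group `(ℤ^κ, ℤ₊^κ)` (written multiplicatively). -/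
def ZQL (κ : Type*) : QuasiLattice (Multiplicative (κ → ℤ)) where
  P := {x | ∀ i, 0 ≤ Multiplicative.toAdd x i}
  one_mem := fun i => le_refl 0
  mul_mem := fun {a b} ha hb i => add_nonneg (ha i) (hb i)
  antisymm' := fun g hg hg' => by
    have h : ∀ i, Multiplicative.toAdd g i = 0 := fun i => by
      have h1 := hg i
      have h2 := hg' i
      simp only [toAdd_inv, Pi.neg_apply] at h2
      omega
    have : Multiplicative.toAdd g = 0 := funext h
    simpa using this
  lub_exists := fun p hp q hq _ => by
    refine ⟨Multiplicative.ofAdd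
      (fun i => max (Multiplicative.toAdd p i) (Multiplicative.toAdd q i)), ?_, ?_, ?_, ?_⟩
    · intro i
      have := hp i
      simp only [toAdd_ofAdd]
      omega
    · intro i
      simp only [toAdd_mul, toAdd_inv, Pi.add_apply,
        Pi.neg_apply, toAdd_ofAdd]
      omega
    · intro i
      simp only [toAdd_mul, toAdd_inv, Pi.add_apply,
        Pi.neg_apply, toAdd_ofAdd]
      omega
    · intro s _ hps hqs i
      have h1 := hps i
      have h2 := hqs i
      simp only [toAdd_mul, toAdd_inv, Pi.add_apply,
        Pi.neg_apply, toAdd_ofAdd] at h1 h2 ⊢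
      omega

namespace QuasiLattice

variable {G : Type*} [Group G] (Q : QuasiLattice G)

protected theorem le_refl (a : G) : Q.le a a := by
  simpa [QuasiLattice.le] using Q.one_mem

protected theorem le_trans {a b c : G} (hab : Q.le a b) (hbc : Q.le b c) : Q.le a c := by
  simpa [QuasiLattice.le, mul_assoc] using Q.mul_mem hab hbc

protected theorem le_antisymm {a b : G} (hab : Q.le a b) (hba : Q.le b a) : a = b := by
  have h : a⁻¹ * b = 1 := Q.antisymm' _ hab (by simpa [QuasiLattice.le] using hba)
  simpa using (congrArg (a * ·) h).symm

abbrev toPartialOrder : PartialOrder G where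
  le := Q.le
  le_refl := Q.le_refl
  le_trans _ _ _ := Q.le_trans
  le_antisymm _ _ := Q.le_antisymm

end QuasiLattice

namespace ZQL

variable {κ : Type*}

theorem le_iff {a b : Multiplicative (κ → ℤ)} :
    (ZQL κ).le a b ↔ Multiplicative.toAdd a ≤ Multiplicative.toAdd b := by
  simp only [ZQL, QuasiLattice.le, Set.mem_ofPred_eq, toAdd_mul, toAdd_inv, Pi.add_apply,
    Pi.neg_apply, Pi.le_def]
  exact forall_congr' fun _ => by omega

theorem finite_interval [Finite κ] (a b : Multiplicative (κ → ℤ)) :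
    {x | (ZQL κ).le a x ∧ (ZQL κ).le x b}.Finite := by
  have := Fintype.ofFinite κ
  classical
  simp only [le_iff]
  exact (Set.finite_Icc (Multiplicative.toAdd a) (Multiplicative.toAdd b)).preimage
    Multiplicative.toAdd.injective.injOn

end ZQL

namespace ControlledMap

variable {G G' : Type*} [Group G] [Group G'] {Q : QuasiLattice G} {Q' : QuasiLattice G'}
  (θ : ControlledMap Q Q')

theorem monotone {a b : G} (hab : Q.le a b) : Q'.le (θ.toFun a) (θ.toFun b) := by
  simpa [QuasiLattice.le] using θ.mapsP _ hab

theorem finite_mem_P_map_mem {s : Set G'} (hs : s.Finite) :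
    {p | p ∈ Q.P ∧ θ.toFun p ∈ s}.Finite :=
  (hs.biUnion fun x _ => θ.finite_fibers x).subset fun _ ⟨hp, hps⟩ =>
    Set.mem_biUnion hps ⟨hp, rfl⟩

variable {θ} in
theorem MinimalityProperty.eq_of_le_of_le (hθ : θ.MinimalityProperty) {m : G'} (hm : m ∈ Q'.P)
    {r r' s : G} (hr : θ.Minimal m r) (hr' : θ.Minimal m r') (hs : s ∈ Q.P) (hrs : Q.le r s)
    (hr's : Q.le r' s) : r = r' := by
  by_contra hne
  exact hθ m hm r r' hr hr' hne ⟨s, hs, hrs, hr's⟩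

section IntegerLatticeTarget

variable {κ : Type*} [Finite κ] {θ : ControlledMap Q (ZQL κ)} {m : Multiplicative (κ → ℤ)}

variable (θ) in
theorem exists_minimal_le {p : G} (hp : p ∈ Q.P) (hmp : (ZQL κ).le m (θ.toFun p)) :
    ∃ r, θ.Minimal m r ∧ Q.le r p := by
  let := Q.toPartialOrder
  set S := {r | r ∈ Q.P ∧ (ZQL κ).le m (θ.toFun r) ∧ Q.le r p}
  have hS : S.Finite := (θ.finite_mem_P_map_mem (ZQL.finite_interval m (θ.toFun p))).subset
    fun r ⟨hr, hmr, hrp⟩ => ⟨hr, hmr, θ.monotone hrp⟩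
  obtain ⟨r, hrp, hr⟩ := hS.exists_le_minimal (a := p) ⟨hp, hmp, Q.le_refl p⟩
  refine ⟨r, ⟨hr.prop.1, hr.prop.2.1, fun x hx hmx hxr => ?_⟩, hrp⟩
  exact hr.eq_of_le (show x ∈ S from ⟨hx, hmx, Q.le_trans hxr hrp⟩) hxr

theorem MinimalityProperty.existsUnique_minimal_le (hθ : θ.MinimalityProperty)
    (hm : m ∈ (ZQL κ).P) {p : G} (hp : p ∈ Q.P)
    (hmp : (ZQL κ).le m (θ.toFun p)) : ∃! r, θ.Minimal m r ∧ Q.le r p :=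
  let ⟨r, hr, hrp⟩ := θ.exists_minimal_le hp hmp
  ⟨r, ⟨hr, hrp⟩, fun _ ⟨hr', hr'p⟩ => hθ.eq_of_le_of_le hm hr' hr hp hr'p hrp⟩

theorem MinimalityProperty.le_of_hasCUB (hθ : θ.MinimalityProperty) (hm : m ∈ (ZQL κ).P)
    {r q : G} (hr : θ.Minimal m r) (hq : q ∈ Q.P)
    (hmq : (ZQL κ).le m (θ.toFun q)) (hrq : Q.HasCUB r q) : Q.le r q := by
  obtain ⟨r', hr', hr'q⟩ := θ.exists_minimal_le hq hmq
  obtain ⟨s, hs, hrs, hqs⟩ := hrq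
  obtain rfl := hθ.eq_of_le_of_le hm hr hr' hs hrs (Q.le_trans hr'q hqs)
  exact hr'q

end IntegerLatticeTarget

end ControlledMap

/-- For a controlled map `ϑ : (G,P) → (ℤ^N, ℤ₊^N)` with the
minimality property and `m ∈ ℤ₊^N`: every `p ∈ P` with `ϑ(p) ≥ m` factors as
`p = r p'` through a unique minimal element `r` of `ϑ⁻¹([m,∞]) ∩ P` with `r ≤ p`;
and if `r` is minimal in `ϑ⁻¹([m,∞]) ∩ P` with `ϑ(r) ∉ [m, m+m']`, then `r ∨ q = ∞`
for every `q ∈ P` with `ϑ(q) ∈ [m, m+m']`. -/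
theorem controlledMap_minimality_factorisation {G : Type*} [Group G] {N : ℕ}
    {Q : QuasiLattice G} (θ : ControlledMap Q (ZQL (Fin N)))
    (hmin : θ.MinimalityProperty)
    (m : Multiplicative (Fin N → ℤ)) (hm : m ∈ (ZQL (Fin N)).P) :
    (∀ p ∈ Q.P, (ZQL (Fin N)).le m (θ.toFun p) →
      ∃! r : G, θ.Minimal m r ∧ Q.le r p) ∧
    (∀ r : G, θ.Minimal m r →
      ∀ m' ∈ (ZQL (Fin N)).P, ¬ (ZQL (Fin N)).le (θ.toFun r) (m * m') →
        ∀ q ∈ Q.P, (ZQL (Fin N)).le m (θ.toFun q) →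
          (ZQL (Fin N)).le (θ.toFun q) (m * m') → ¬ Q.HasCUB r q) := by
  refine ⟨fun p hp hmp => hmin.existsUnique_minimal_le hm hp hmp, ?_⟩
  intro r hr m' _ hrm' q hq hmq hqm' hrq
  exact hrm' ((ZQL _).le_trans (θ.monotone (hmin.le_of_hasCUB hm hr hq hmq hrq)) hqm')
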